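/- arXiv:2001.03188 — 2 statements merged into one kernel-verified Lean document; each statement's English description precedes it below -/
import Mathlib

section
/- Let L be a lattice generated by a three-element subset {a₁, a₂, a₃}, and let {i, j, k} = {1, 2, 3}. If aᵢ ∧ aⱼ ≠ a₁ ∧ a₂ ∧ a₃ (equivalently, aᵢ ∧ aⱼ ≰ aₖ), then L is the disjoint union of the principal filter ↑(aᵢ ∧ aⱼ) and the principal ideal ↓aₖ. -/
/-- `G` generates the lattice `L`: `G` is contained in no proper sublattice. -/
def GeneratesLat {L : Type*} [Lattice L] (G : Set L) : Prop :=
  latticeClosure G = Set.univ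

/-! `↑m ∪ ↓b` is a sublattice of any lattice, and for `m = aᵢ ⊓ aⱼ`, `b = aₖ` it contains the
generators, hence is everything. The two pieces are disjoint as soon as `aᵢ ⊓ aⱼ ≰ aₖ`, which is
what `aᵢ ⊓ aⱼ ≠ a₁ ⊓ a₂ ⊓ a₃` says. -/

lemma isSublattice_Ici_union_Iic {L : Type*} [Lattice L] (m b : L) :
    IsSublattice (Set.Ici m ∪ Set.Iic b) where
  supClosed := by
    rintro x (hx | hx) y (hy | hy)
    · exact Or.inl (le_sup_of_le_left hx)
    · exact Or.inl (le_sup_of_le_left hx)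
    · exact Or.inl (le_sup_of_le_right hy)
    · exact Or.inr (sup_le hx hy)
  infClosed := by
    rintro x (hx | hx) y (hy | hy)
    · exact Or.inl (le_inf hx hy)
    · exact Or.inr (inf_le_of_right_le hy)
    · exact Or.inr (inf_le_of_left_le hx)
    · exact Or.inr (inf_le_of_left_le hx)

lemma GeneratesLat.eq_univ_of_subset {L : Type*} [Lattice L] {G S : Set L}
    (hgen : GeneratesLat G) (hS : IsSublattice S) (hGS : G ⊆ S) : S = Set.univ :=
  Set.eq_univ_of_univ_subset (hgen ▸ latticeClosure_min hGS hS)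

lemma forall_of_triple_eq_univ {ι : Type*} {P : ι → Prop} {i j k : ι}
    (hijk : ({i, j, k} : Set ι) = Set.univ) (hi : P i) (hj : P j) (hk : P k) (n : ι) : P n := by
  obtain rfl | rfl | rfl : n = i ∨ n = j ∨ n = k := by
    simpa only [← hijk, Set.mem_insert_iff, Set.mem_singleton_iff] using Set.mem_univ n
  exacts [hi, hj, hk]

lemma le_inf_fin_three_iff {L : Type*} [Lattice L] {a : Fin 3 → L} {x : L} :
    x ≤ a 0 ⊓ a 1 ⊓ a 2 ↔ ∀ n, x ≤ a n := by
  refine ⟨fun h n => h.trans ?_, fun h => le_inf (le_inf (h 0) (h 1)) (h 2)⟩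
  fin_cases n
  exacts [inf_le_left.trans inf_le_left, inf_le_left.trans inf_le_right, inf_le_right]

theorem stmt_6_general {L : Type*} [Lattice L] (a : Fin 3 → L)
    (hgen : GeneratesLat (Set.range a))
    (i j k : Fin 3) (hijk : ({i, j, k} : Set (Fin 3)) = Set.univ)
    (hne : a i ⊓ a j ≠ a 0 ⊓ a 1 ⊓ a 2) :
    Set.Ici (a i ⊓ a j) ∪ Set.Iic (a k) = Set.univ ∧
      Disjoint (Set.Ici (a i ⊓ a j)) (Set.Iic (a k)) := by
  have hbot_le : a 0 ⊓ a 1 ⊓ a 2 ≤ a i ⊓ a j :=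
    le_inf (le_inf_fin_three_iff.1 le_rfl i) (le_inf_fin_three_iff.1 le_rfl j)
  have hnot_le : ¬ a i ⊓ a j ≤ a k := fun hk =>
    hne <| le_antisymm
      (le_inf_fin_three_iff.2 (forall_of_triple_eq_univ hijk inf_le_left inf_le_right hk))
      hbot_le
  refine ⟨hgen.eq_univ_of_subset (isSublattice_Ici_union_Iic _ _) ?_,
    Set.Ici_disjoint_Iic.2 hnot_le⟩
  rintro _ ⟨n, rfl⟩
  exact forall_of_triple_eq_univ (P := fun n => a n ∈ Set.Ici (a i ⊓ a j) ∪ Set.Iic (a k)) hijk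
    (Or.inl inf_le_left) (Or.inl inf_le_right) (Or.inr le_rfl) n

theorem stmt_6 {L : Type*} [Lattice L] (a : Fin 3 → L)
    (hthree : (Set.range a).ncard = 3)
    (hgen : GeneratesLat (Set.range a))
    (i j k : Fin 3) (hijk : ({i, j, k} : Set (Fin 3)) = Set.univ)
    (hne : a i ⊓ a j ≠ a 0 ⊓ a 1 ⊓ a 2) :
    Set.Ici (a i ⊓ a j) ∪ Set.Iic (a k) = Set.univ ∧
      Disjoint (Set.Ici (a i ⊓ a j)) (Set.Iic (a k)) :=
  stmt_6_general a hgen i j k hijk hne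
end

section
/- Every lattice generated by a three-element subset has at least one atom or at least one coatom. -/
/-!
Let `x, y, z` be the generators. If every generator lies below `c` or above `a`, so does
every element, since such elements form a sublattice; in the same way `x ⊓ y ⊓ z` is the least
and `x ⊔ y ⊔ z` the greatest element. Hence if `x ⊓ y ≰ z`, every `w ≤ x ⊓ y` is either below
`x ⊓ y ⊓ z` or equal to `x ⊓ y`, so `x ⊓ y` is an atom; dually `x ⊔ y` is a coatom if
`z ≰ x ⊔ y`. In the remaining case the distinct generators pairwise meet in a common element `b`
and join in a common element `t`, so `{b, t, x, y, z}` is a sublattice (a copy of `M₃`), hence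
all of `L`, and `x` is an atom.
-/

/-- A set has exactly two elements. -/
def TwoElem {α : Type*} (s : Set α) : Prop := ∃ x y : α, x ≠ y ∧ s = {x, y}

/-- `a` is an atom of the lattice `L`: the principal ideal `↓a` has exactly two elements. -/
def IsAtomOf {L : Type*} [Lattice L] (a : L) : Prop := TwoElem (Set.Iic a)

/-- `a` is a coatom of the lattice `L`: the principal filter `↑a` has exactly two elements. -/
def IsCoatomOf {L : Type*} [Lattice L] (a : L) : Prop := TwoElem (Set.Ici a)

open OrderDual

section
variable {α : Type*} [Lattice α]

lemma GeneratesLat.mem_of_isSublattice {G S : Set α} (hgen : GeneratesLat G)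
    (hS : IsSublattice S) (hGS : G ⊆ S) (w : α) : w ∈ S :=
  latticeClosure_min hGS hS (hgen ▸ Set.mem_univ w)

lemma GeneratesLat.dual {G : Set α} (hgen : GeneratesLat G) : GeneratesLat (ofDual ⁻¹' G) := by
  rw [GeneratesLat, ← ofDual_preimage_latticeClosure, hgen, Set.preimage_univ]

lemma GeneratesLat.le_of_forall_le {G : Set α} (hgen : GeneratesLat G) {a : α}
    (h : ∀ g ∈ G, a ≤ g) (w : α) : a ≤ w :=
  hgen.mem_of_isSublattice (S := Set.Ici a)
    ⟨fun _ hu _ _ => le_sup_of_le_left hu, fun _ hu _ hv => le_inf hu hv⟩ h w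

lemma GeneratesLat.le_or_le {G : Set α} (hgen : GeneratesLat G) {a c : α}
    (h : ∀ g ∈ G, g ≤ c ∨ a ≤ g) (w : α) : w ≤ c ∨ a ≤ w := by
  refine hgen.mem_of_isSublattice (S := {w | w ≤ c ∨ a ≤ w}) ⟨?_, ?_⟩ h w
  · rintro u (hu | hu) v (hv | hv)
    exacts [Or.inl (sup_le hu hv), Or.inr (le_sup_of_le_right hv),
      Or.inr (le_sup_of_le_left hu), Or.inr (le_sup_of_le_left hu)]
  · rintro u (hu | hu) v (hv | hv)
    exacts [Or.inl (inf_le_of_left_le hu), Or.inl (inf_le_of_left_le hu),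
      Or.inl (inf_le_of_right_le hv), Or.inr (le_inf hu hv)]

lemma isAtomOf_inf {x y z : α} (hgen : GeneratesLat {x, y, z}) (h : ¬ x ⊓ y ≤ z) :
    IsAtomOf (x ⊓ y) := by
  have hbot := hgen.le_of_forall_le (a := x ⊓ y ⊓ z) (by
    rintro g (rfl | rfl | rfl)
    exacts [inf_le_left.trans inf_le_left, inf_le_left.trans inf_le_right, inf_le_right])
  have hsplit := hgen.le_or_le (a := x ⊓ y) (c := z) (by
    rintro g (rfl | rfl | rfl)
    exacts [Or.inr inf_le_left, Or.inr inf_le_right, Or.inl le_rfl])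
  refine ⟨x ⊓ y ⊓ z, x ⊓ y, fun he => h (he ▸ inf_le_right),
    Set.ext fun w => ⟨fun hw => ?_, ?_⟩⟩
  · rcases hsplit w with hwz | hw'
    · exact Or.inl (le_antisymm (le_inf hw hwz) (hbot w))
    · exact Or.inr (le_antisymm hw hw')
  · rintro (rfl | rfl)
    exacts [inf_le_left, le_rfl]

lemma isCoatomOf_sup {x y z : α} (hgen : GeneratesLat {x, y, z}) (h : ¬ z ≤ x ⊔ y) :
    IsCoatomOf (x ⊔ y) :=
  isAtomOf_inf (x := toDual x) (y := toDual y) (z := toDual z) hgen.dual h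

lemma eq_of_le_of_inf_le_of_le_sup_of_le_sup {x y z : α} (hyx_nle : y ≤ x) (h₁ : x ⊓ y ≤ z)
    (h₂ : x ≤ y ⊔ z) (h₃ : z ≤ x ⊔ y) : x = z := by
  have hyz : y ≤ z := inf_eq_right.mpr hyx_nle ▸ h₁
  exact le_antisymm (sup_eq_right.mpr hyz ▸ h₂) (sup_eq_left.mpr hyx_nle ▸ h₃)

lemma supClosed_insert_of_pairwise_sup_eq {t : α} {A : Set α} (hle : ∀ a ∈ A, a ≤ t)
    (hsup : A.Pairwise fun u v => u ⊔ v = t) : SupClosed (insert t A) := by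
  intro u hu v hv
  obtain rfl | huv := eq_or_ne u v
  · rwa [sup_idem]
  rcases hu with rfl | hu
  · rw [sup_eq_left.mpr (by rcases hv with rfl | hv; exacts [le_rfl, hle v hv])]
    exact Set.mem_insert _ _
  rcases hv with rfl | hv
  · rw [sup_eq_right.mpr (hle u hu)]
    exact Set.mem_insert _ _
  rw [hsup hu hv huv]
  exact Set.mem_insert _ _

lemma infClosed_insert_of_pairwise_inf_eq {b : α} {A : Set α} (hle : ∀ a ∈ A, b ≤ a)
    (hinf : A.Pairwise fun u v => u ⊓ v = b) : InfClosed (insert b A) :=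
  supClosed_preimage_toDual.mp <|
    supClosed_insert_of_pairwise_sup_eq (α := αᵒᵈ) (t := toDual b) (A := ofDual ⁻¹' A)
      hle hinf

lemma isAtomOf_of_generates_of_inf_le_of_le_sup {x y z : α}
    (hxy : x ≠ y) (hxz : x ≠ z) (hyz : y ≠ z) (hgen : GeneratesLat {x, y, z})
    (hxy_z : x ⊓ y ≤ z) (hxz_y : x ⊓ z ≤ y) (hyz_x : y ⊓ z ≤ x)
    (hz_xy : z ≤ x ⊔ y) (hy_xz : y ≤ x ⊔ z) (hx_yz : x ≤ y ⊔ z) : IsAtomOf x := by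
  have hxz_inf : x ⊓ z = x ⊓ y :=
    le_antisymm (le_inf inf_le_left hxz_y) (le_inf inf_le_left hxy_z)
  have hyz_inf : y ⊓ z = x ⊓ y :=
    le_antisymm (le_inf hyz_x inf_le_left) (le_inf inf_le_right hxy_z)
  have hxz_sup : x ⊔ z = x ⊔ y :=
    le_antisymm (sup_le le_sup_left hz_xy) (sup_le le_sup_left hy_xz)
  have hyz_sup : y ⊔ z = x ⊔ y :=
    le_antisymm (sup_le le_sup_right hz_xy) (sup_le hx_yz le_sup_left)
  have hsub : IsSublattice (insert (x ⊓ y) (insert (x ⊔ y) {x, y, z})) := by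
    constructor
    · refine SupClosed.insert_lowerBounds (supClosed_insert_of_pairwise_sup_eq ?_ ?_) ?_
      · simp [hz_xy]
      · simp [Set.pairwise_insert, hxy, hxz, hyz, hxz_sup, hyz_sup, sup_comm]
      · simp [hxy_z, le_sup_of_le_left]
    · rw [Set.insert_comm]
      refine InfClosed.insert_upperBounds (infClosed_insert_of_pairwise_inf_eq ?_ ?_) ?_
      · simp [hxy_z]
      · simp [Set.pairwise_insert, hxy, hxz, hyz, hxz_inf, hyz_inf, inf_comm]
      · simp [hz_xy, inf_le_of_left_le]
  have hyx_nle : ¬ y ≤ x := fun h =>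
    hxz (eq_of_le_of_inf_le_of_le_sup_of_le_sup h hxy_z hx_yz hz_xy)
  have hzx_nle : ¬ z ≤ x := fun h => hxy (eq_of_le_of_inf_le_of_le_sup_of_le_sup h hxz_y
    (sup_comm y z ▸ hx_yz) (sup_comm x z ▸ hy_xz))
  have hxy_nle : ¬ x ≤ y := fun h => hyz (eq_of_le_of_inf_le_of_le_sup_of_le_sup h
    (inf_comm x y ▸ hxy_z) (sup_comm x z ▸ hy_xz) (sup_comm x y ▸ hz_xy))
  refine ⟨x ⊓ y, x, fun h => hxy_nle (h ▸ inf_le_right), Set.ext fun w => ⟨fun hw => ?_, ?_⟩⟩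
  · rcases hgen.mem_of_isSublattice hsub (by simp [Set.insert_subset_iff]) w
      with rfl | rfl | rfl | rfl | rfl
    exacts [Or.inl rfl, absurd (le_sup_right.trans hw) hyx_nle, Or.inr rfl, absurd hw hyx_nle,
      absurd hw hzx_nle]
  · rintro (rfl | rfl)
    exacts [inf_le_left, le_rfl]

end

theorem stmt_11 {L : Type*} [Lattice L] (G : Set L)
    (hthree : G.ncard = 3) (hgen : GeneratesLat G) :
    (∃ x : L, IsAtomOf x) ∨ (∃ x : L, IsCoatomOf x) := by
  obtain ⟨x, y, z, hxy, hxz, hyz, rfl⟩ := Set.ncard_eq_three.mp hthree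
  have hgen_xzy : GeneratesLat {x, z, y} := by rwa [Set.pair_comm]
  have hgen_yzx : GeneratesLat {y, z, x} := by rwa [Set.pair_comm z x, Set.insert_comm y x]
  by_contra! ⟨hatom, hcoatom⟩
  have hinf {a b c : L} (hg : GeneratesLat {a, b, c}) : a ⊓ b ≤ c :=
    not_not.mp fun h => hatom _ (isAtomOf_inf hg h)
  have hsup {a b c : L} (hg : GeneratesLat {a, b, c}) : c ≤ a ⊔ b :=
    not_not.mp fun h => hcoatom _ (isCoatomOf_sup hg h)
  exact hatom x <| isAtomOf_of_generates_of_inf_le_of_le_sup hxy hxz hyz hgen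
    (hinf hgen) (hinf hgen_xzy) (hinf hgen_yzx) (hsup hgen) (hsup hgen_xzy) (hsup hgen_yzx)
end
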